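/- arXiv:2410.07623 — 2 statements merged into one kernel-verified Lean document; each statement's English description precedes it below -/
import Mathlib

section
/- Let X be a non-zero real normed linear space and let x, y ∈ X with x ≠ 0 and y ≠ 0. If x ⊥∞ y, then (‖x‖⁻¹ x + ‖y‖⁻¹ y) ⊥₁ (‖x‖⁻¹ x − ‖y‖⁻¹ y). -/
/-- `x` is 1-orthogonal to `y`: `‖x + k y‖ = ‖x‖ + ‖k y‖` for all `k ∈ ℝ`. -/
def PerpOne {X : Type*} [NormedAddCommGroup X] [NormedSpace ℝ X] (x y : X) : Prop :=
  ∀ k : ℝ, ‖x + k • y‖ = ‖x‖ + ‖k • y‖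

/-- `x` is ∞-orthogonal to `y`: `‖x + k y‖ = max {‖x‖, ‖k y‖}` for all `k ∈ ℝ`. -/
def PerpInf {X : Type*} [NormedAddCommGroup X] [NormedSpace ℝ X] (x y : X) : Prop :=
  ∀ k : ℝ, ‖x + k • y‖ = max ‖x‖ ‖k • y‖

/-!
∞-orthogonality is invariant under independent rescaling of both vectors, so the unit vectors
`u = x / ‖x‖`, `v = y / ‖y‖` satisfy `‖a u + b v‖ = max |a| |b|`. Then
`‖(u + v) + k (u - v)‖ = ‖(1 + k) u + (1 - k) v‖ = max |1 + k| |1 - k| = 1 + |k|`,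
while `‖u + v‖ = 1` and `‖k (u - v)‖ = |k|`.
-/

theorem max_abs_add_abs_sub {α : Type*} [AddCommGroup α] [LinearOrder α] [IsOrderedAddMonoid α]
    (a b : α) : max |a + b| |a - b| = |a| + |b| := by
  refine le_antisymm (max_le (abs_add_le a b) (abs_sub a b)) ?_
  have hsub : |a - b| = |a| + |b| ↔ 0 ≤ a ∧ b ≤ 0 ∨ a ≤ 0 ∧ 0 ≤ b := by
    rw [sub_eq_add_neg, ← abs_neg b, abs_add_eq_add_abs_iff, neg_nonneg, neg_nonpos]
  rcases le_total 0 a with ha | ha <;> rcases le_total 0 b with hb | hb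
  · exact ((abs_add_eq_add_abs_iff a b).2 (.inl ⟨ha, hb⟩)).ge.trans (le_max_left _ _)
  · exact (hsub.2 (.inl ⟨ha, hb⟩)).ge.trans (le_max_right _ _)
  · exact (hsub.2 (.inr ⟨ha, hb⟩)).ge.trans (le_max_right _ _)
  · exact ((abs_add_eq_add_abs_iff a b).2 (.inr ⟨ha, hb⟩)).ge.trans (le_max_left _ _)

section PerpInf

variable {X : Type*} [NormedAddCommGroup X] [NormedSpace ℝ X] {x y : X}

theorem PerpInf.norm_smul_add_smul (h : PerpInf x y) (a b : ℝ) :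
    ‖a • x + b • y‖ = max ‖a • x‖ ‖b • y‖ := by
  rcases eq_or_ne a 0 with rfl | ha
  · simp
  have hxy : a • x + b • y = a • (x + (b / a) • y) := by
    rw [smul_add, smul_smul, mul_div_cancel₀ b ha]
  rw [hxy, norm_smul, h, mul_max_of_nonneg _ _ (norm_nonneg a), ← norm_smul, ← norm_smul,
    smul_smul, mul_div_cancel₀ b ha]

theorem PerpInf.smul (h : PerpInf x y) (a b : ℝ) : PerpInf (a • x) (b • y) := fun k => by
  rw [smul_smul, h.norm_smul_add_smul]

theorem PerpInf.norm_smul_add_smul_of_norm_eq_one (h : PerpInf x y) (hx : ‖x‖ = 1)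
    (hy : ‖y‖ = 1) (a b : ℝ) : ‖a • x + b • y‖ = max |a| |b| := by
  rw [h.norm_smul_add_smul, norm_smul, norm_smul, hx, hy, mul_one, mul_one, Real.norm_eq_abs,
    Real.norm_eq_abs]

end PerpInf

theorem perpInf_to_perpOne_general {X : Type*} [NormedAddCommGroup X] [NormedSpace ℝ X]
    (x y : X) (hx : x ≠ 0) (hy : y ≠ 0) (h : PerpInf x y) :
    PerpOne (‖x‖⁻¹ • x + ‖y‖⁻¹ • y) (‖x‖⁻¹ • x - ‖y‖⁻¹ • y) := by
  set u := ‖x‖⁻¹ • x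
  set v := ‖y‖⁻¹ • y
  have huv : ∀ a b : ℝ, ‖a • u + b • v‖ = max |a| |b| :=
    (h.smul _ _).norm_smul_add_smul_of_norm_eq_one (norm_smul_inv_norm hx) (norm_smul_inv_norm hy)
  have hadd : ‖u + v‖ = 1 := by simpa using huv 1 1
  have hsub : ‖u - v‖ = 1 := by simpa [sub_eq_add_neg] using huv 1 (-1)
  intro k
  calc ‖u + v + k • (u - v)‖ = ‖(1 + k) • u + (1 - k) • v‖ := by congr 1; module
    _ = |1| + |k| := by rw [huv, max_abs_add_abs_sub]
    _ = ‖u + v‖ + ‖k • (u - v)‖ := by rw [hadd, norm_smul, hsub, Real.norm_eq_abs]; simp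

theorem perpInf_to_perpOne {X : Type*} [NormedAddCommGroup X] [NormedSpace ℝ X] [Nontrivial X]
    (x y : X) (hx : x ≠ 0) (hy : y ≠ 0) (h : PerpInf x y) :
    PerpOne (‖x‖⁻¹ • x + ‖y‖⁻¹ • y) (‖x‖⁻¹ • x - ‖y‖⁻¹ • y) :=
  perpInf_to_perpOne_general x y hx hy h
end

section
/- Let X be a non-zero real normed linear space and let X̃ = ℝ ⊕₁ X with norm ‖(α, x)‖ = |α| + ‖x‖ and positive cone X̃⁺ = {(α, x) : ‖x‖ ≤ α}. Then (1/2, x) has the order unit property in X̃ for every x ∈ X with ‖x‖ = 1/2 if and only if X is strictly convex. -/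
section Adjoin

variable {X : Type*} [NormedAddCommGroup X] [NormedSpace ℝ X]

/-- Membership in the positive cone of `X̃ = ℝ ⊕₁ X`: `(α, x) ∈ X̃⁺` iff `‖x‖ ≤ α`. -/
def tildePos (p : ℝ × X) : Prop := ‖p.2‖ ≤ p.1

/-- The norm of `X̃ = ℝ ⊕₁ X`: `‖(α, x)‖ = |α| + ‖x‖`. -/
noncomputable def tildeNorm (p : ℝ × X) : ℝ := |p.1| + ‖p.2‖

/-- `u ∈ X̃⁺` has the order unit property in `X̃`: whenever `λ u + v ∈ X̃⁺` and
`λ u - v ∈ X̃⁺` for some `λ > 0`, also `‖v‖ u + v ∈ X̃⁺` and `‖v‖ u - v ∈ X̃⁺`. -/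
noncomputable def tildeHasOUP (u : ℝ × X) : Prop :=
  ∀ v : ℝ × X, (∃ l : ℝ, 0 < l ∧ tildePos (l • u + v) ∧ tildePos (l • u - v)) →
    tildePos (tildeNorm v • u + v) ∧ tildePos (tildeNorm v • u - v)

end Adjoin

/-!
In `X̃` the order ideal generated by `u = (1/2, x)`, `‖x‖ = 1/2`, consists of the `v = (β, w)` with
`‖l x + w‖ ≤ l/2 + β` and `‖l x - w‖ ≤ l/2 - β` for some `l > 0`. Adding the two inequalities shows
that they are equalities and that `l x ± w` realise equality in the triangle inequality. In a
strictly convex space this forces them onto a common ray, hence `v ∈ ℝ u`, and every multiple of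
the unit-norm positive element `u` satisfies the order unit inequalities. Conversely, if `y ≠ z`
are unit vectors with `‖y + z‖ = 2`, then `u = (1/2, (y + z)/4)` and `v = (0, (y - z)/4)` satisfy
`u ± v = (1/2, y/2), (1/2, z/2) ∈ X̃⁺`, while `‖v‖ u ± v ∈ X̃⁺` would force `‖v‖ ≤ ‖v‖/2`.
-/

section

variable {X : Type*} [NormedAddCommGroup X] [NormedSpace ℝ X]

theorem tildePos_smul {c : ℝ} {p : ℝ × X} (hc : 0 ≤ c) (hp : tildePos p) :
    tildePos (c • p) := by
  simp only [tildePos, Prod.smul_fst, Prod.smul_snd, smul_eq_mul, norm_smul,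
    Real.norm_of_nonneg hc] at hp ⊢
  exact mul_le_mul_of_nonneg_left hp hc

theorem tildeNorm_smul (c : ℝ) (p : ℝ × X) : tildeNorm (c • p) = |c| * tildeNorm p := by
  simp only [tildeNorm, Prod.smul_fst, Prod.smul_snd, smul_eq_mul, abs_mul, norm_smul,
    Real.norm_eq_abs]
  ring

theorem norm_snd_le_of_tildePos_add_sub {l : ℝ} {u v : ℝ × X} (h₁ : tildePos (l • u + v))
    (h₂ : tildePos (l • u - v)) : ‖v.2‖ ≤ l * u.1 := by
  simp only [tildePos, Prod.fst_add, Prod.snd_add, Prod.fst_sub, Prod.snd_sub, Prod.smul_fst,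
    Prod.smul_snd, smul_eq_mul] at h₁ h₂
  have h2v : ‖(2 : ℝ) • v.2‖ ≤ ‖l • u.2 + v.2‖ + ‖l • u.2 - v.2‖ := by
    rw [show (2 : ℝ) • v.2 = (l • u.2 + v.2) - (l • u.2 - v.2) by module]
    exact norm_sub_le _ _
  rw [norm_smul, Real.norm_two] at h2v
  linarith

theorem tildeHasOUP_of_forall_eq_smul {u : ℝ × X} (hu : tildePos u) (hu1 : tildeNorm u = 1)
    (h : ∀ v : ℝ × X, (∃ l : ℝ, 0 < l ∧ tildePos (l • u + v) ∧ tildePos (l • u - v)) →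
      ∃ c : ℝ, v = c • u) :
    tildeHasOUP u := by
  intro v hv
  obtain ⟨c, rfl⟩ := h v hv
  rw [tildeNorm_smul, hu1, mul_one, ← add_smul, ← sub_smul]
  exact ⟨tildePos_smul (by linarith [neg_abs_le c]) hu,
    tildePos_smul (sub_nonneg.2 (le_abs_self c)) hu⟩

theorem snd_eq_zero_of_tildeHasOUP {u : ℝ × X} (hu : tildeHasOUP u) (hu1 : u.1 < 1) {l : ℝ}
    (hl : 0 < l) {w : X} (h₁ : tildePos (l • u + (0, w))) (h₂ : tildePos (l • u - (0, w))) :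
    w = 0 := by
  have hw : tildeNorm ((0 : ℝ), w) = ‖w‖ := by simp [tildeNorm]
  obtain ⟨h₁', h₂'⟩ := hu (0, w) ⟨l, hl, h₁, h₂⟩
  rw [hw] at h₁' h₂'
  have := norm_snd_le_of_tildePos_add_sub h₁' h₂'
  exact norm_le_zero_iff.1 (by nlinarith [norm_nonneg w])

theorem smul_eq_fst_smul_of_tildePos_add_sub [StrictConvexSpace ℝ X] {α l : ℝ} {x : X}
    {v : ℝ × X} (hx : ‖x‖ = α) (hl : 0 < l) (h₁ : tildePos (l • (α, x) + v))
    (h₂ : tildePos (l • (α, x) - v)) :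
    α • v = v.1 • (α, x) := by
  obtain ⟨β, w⟩ := v
  simp only [tildePos, Prod.smul_mk, Prod.mk_add_mk, Prod.mk_sub_mk, smul_eq_mul] at h₁ h₂
  have hsum : ‖(l • x + w) + (l • x - w)‖ = 2 * l * α := by
    rw [show (l • x + w) + (l • x - w) = (2 * l) • x by module, norm_smul, hx,
      Real.norm_of_nonneg (by positivity)]
  have htri := norm_add_le (l • x + w) (l • x - w)
  have hp : ‖l • x + w‖ = l * α + β := by linarith
  have hq : ‖l • x - w‖ = l * α - β := by linarith
  have hray := sameRay_iff_norm_smul_eq.1 (sameRay_iff_norm_add.2 (by linarith))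
  rw [hp, hq] at hray
  have hzero : (2 * l) • (α • w - β • x) = 0 := by
    linear_combination (norm := module) -hray
  rw [smul_eq_zero, sub_eq_zero] at hzero
  simp only [Prod.smul_mk, smul_eq_mul, mul_comm α β,
    hzero.resolve_left (by positivity)]

theorem eq_of_tildeHasOUP_quarter_add {y z : X}
    (hOUP : tildeHasOUP ((1 / 2 : ℝ), (4 : ℝ)⁻¹ • (y + z))) (hy : ‖y‖ = 1) (hz : ‖z‖ = 1) :
    y = z := by
  have hhalf : ∀ t : X, ‖t‖ = 1 → tildePos ((1 / 2 : ℝ), (2 : ℝ)⁻¹ • t) := fun t ht => by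
    simp only [tildePos, norm_smul, ht]
    norm_num
  have hw := snd_eq_zero_of_tildeHasOUP hOUP (by norm_num) one_pos (w := (4 : ℝ)⁻¹ • (y - z))
    (by convert hhalf y hy using 1; ext <;> simp only [Prod.smul_mk, Prod.mk_add_mk] <;> module)
    (by convert hhalf z hz using 1; ext <;> simp only [Prod.smul_mk, Prod.mk_sub_mk] <;> module)
  rw [smul_eq_zero, sub_eq_zero] at hw
  exact hw.resolve_left (by norm_num)

theorem tildeHasOUP_half_of_strictConvexSpace [StrictConvexSpace ℝ X] {x : X}
    (hx : ‖x‖ = 1 / 2) : tildeHasOUP ((1 / 2 : ℝ), x) := by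
  refine tildeHasOUP_of_forall_eq_smul (le_of_eq hx) (by norm_num [tildeNorm, hx]) ?_
  rintro v ⟨l, hl, h₁, h₂⟩
  refine ⟨2 * v.1, ?_⟩
  rw [mul_smul, ← smul_eq_fst_smul_of_tildePos_add_sub hx hl h₁ h₂, smul_smul]
  norm_num

end

theorem tilde_hasOUP_forall_iff_strictConvex_general {X : Type*} [NormedAddCommGroup X]
    [NormedSpace ℝ X] :
    (∀ x : X, ‖x‖ = 1 / 2 → tildeHasOUP ((1 / 2 : ℝ), x)) ↔
      (∀ y z : X, ‖y‖ = 1 → ‖z‖ = 1 → y ≠ z → ‖y + z‖ < 2) := by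
  refine ⟨fun hOUP y z hy hz hne => ?_, fun hsc x hx => ?_⟩
  · refine ((norm_add_le y z).trans_eq (by rw [hy, hz]; norm_num)).lt_of_ne fun h2 => hne ?_
    refine eq_of_tildeHasOUP_quarter_add (hOUP _ ?_) hy hz
    rw [norm_smul, h2]
    norm_num
  · have := StrictConvexSpace.of_norm_add_ne_two fun y z hy hz hne => (hsc y z hy hz hne).ne
    exact tildeHasOUP_half_of_strictConvexSpace hx

theorem tilde_hasOUP_forall_iff_strictConvex {X : Type*} [NormedAddCommGroup X]
    [NormedSpace ℝ X] [Nontrivial X] :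
    (∀ x : X, ‖x‖ = 1 / 2 → tildeHasOUP ((1 / 2 : ℝ), x)) ↔
      (∀ y z : X, ‖y‖ = 1 → ‖z‖ = 1 → y ≠ z → ‖y + z‖ < 2) :=
  tilde_hasOUP_forall_iff_strictConvex_general
end
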